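/- arXiv:2506.00994 — 4 statements merged into one kernel-verified Lean document; each statement's English description precedes it below -/
import Mathlib

section
/- Let q be a prime power and let K be a finite field with q² elements containing a subfield F with q elements. For every β ∈ K \ F, the product over all α ∈ K \ F with α ≠ β of (β - α) equals -1/(β^q - β). -/
/-!
Over a finite field `K`, every monic divisor of `X ^ #K - X` is the product of the `X - a` over
its roots. For `X ^ #K - X` itself this product runs over all of `K`, and differentiating it at `β`
gives `∏_{α ≠ β} (β - α) = -1`. For `X ^ q - X`, a divisor since `#K = q ^ 2`, the roots form the
subfield `F`, and evaluating at `β` gives `∏_{a ∈ F} (β - a) = β ^ q - β`. Dividing the first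
product by the second leaves the product over `K \ F`.
-/

open Polynomial Finset Lagrange

namespace FiniteField

variable {K : Type*} [Field K] [Fintype K] [DecidableEq K]

theorem eq_nodal_roots_of_dvd_X_pow_card_sub_X {p : K[X]} (hp : p.Monic)
    (hdvd : p ∣ X ^ Fintype.card K - X) : p = nodal p.roots.toFinset id := by
  have hne : (X ^ Fintype.card K - X : K[X]) ≠ 0 :=
    X_pow_card_sub_X_ne_zero K Fintype.one_lt_card
  have hsplits : (X ^ Fintype.card K - X : K[X]).Splits := by
    rw [splits_iff_card_roots, roots_X_pow_card_sub_X,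
      X_pow_card_sub_X_natDegree_eq K Fintype.one_lt_card, ← card_def, card_univ]
  have hnodup : p.roots.Nodup := by
    refine Multiset.nodup_of_le (roots.le_of_dvd hne hdvd) ?_
    rw [roots_X_pow_card_sub_X]
    exact univ.nodup
  rw [nodal, Finset.prod, Multiset.toFinset_val, Multiset.dedup_eq_self.mpr hnodup]
  exact (hsplits.of_dvd hne hdvd).eq_prod_roots_of_monic hp

theorem nodal_univ_id : nodal (univ : Finset K) id = X ^ Fintype.card K - X := by
  have hmonic : (X ^ Fintype.card K - X : K[X]).Monic :=
    monic_X_pow_sub (by rw [degree_X]; exact_mod_cast Fintype.one_lt_card)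
  rw [eq_nodal_roots_of_dvd_X_pow_card_sub_X hmonic dvd_rfl, roots_X_pow_card_sub_X,
    val_toFinset]

theorem prod_erase_sub_eq_neg_one (β : K) : ∏ α ∈ univ.erase β, (β - α) = -1 := by
  have h := eval_nodal_derivative_eval_node_eq (s := univ) (v := id) (mem_univ β)
  rw [nodal_univ_id, eval_nodal] at h
  simpa [derivative_X_pow] using h.symm

theorem roots_toFinset_X_pow_sub_X {q : ℕ} (hq : 1 < q) :
    (X ^ q - X : K[X]).roots.toFinset = univ.filter fun a => a ^ q = a := by
  ext a
  simp [mem_roots (X_pow_card_sub_X_ne_zero K hq), sub_eq_zero]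

theorem prod_sub_of_pow_eq_self {q n : ℕ} (hK : Fintype.card K = q ^ n) (β : K) :
    ∏ a ∈ univ.filter (fun a : K => a ^ q = a), (β - a) = β ^ q - β := by
  have hq : 1 < q := by
    by_contra! hq
    have := pow_le_one₀ (n := n) (Nat.zero_le q) hq
    have := hK ▸ Fintype.one_lt_card (α := K)
    omega
  have hmonic : (X ^ q - X : K[X]).Monic :=
    monic_X_pow_sub (by rw [degree_X]; exact_mod_cast hq)
  have hdvd : (X ^ q - X : K[X]) ∣ X ^ Fintype.card K - X := by
    simpa [hK] using dvd_pow_pow_sub_self_of_dvd (r := (X : K[X])) (p := q) (one_dvd n)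
  have h := congrArg (eval β) (eq_nodal_roots_of_dvd_X_pow_card_sub_X hmonic hdvd)
  rw [eval_nodal, roots_toFinset_X_pow_sub_X hq] at h
  simpa using h.symm

end FiniteField

theorem stmt4_general (q : ℕ) (K : Type*) [Field K] [Fintype K]
    [DecidableEq K] (hK : Fintype.card K = q ^ 2) (β : K) (hβ : β ^ q ≠ β) :
    ∏ α ∈ (Finset.univ.filter (fun α : K => α ^ q ≠ α)).erase β, (β - α)
      = -1 / (β ^ q - β) := by
  have hβF : β ∉ univ.filter (fun a : K => a ^ q = a) := by simpa using hβ
  have h := FiniteField.prod_erase_sub_eq_neg_one β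
  rw [← prod_filter_mul_prod_filter_not _ (fun a => a ^ q = a), filter_erase, filter_erase,
    erase_eq_of_notMem hβF, FiniteField.prod_sub_of_pow_eq_self hK β] at h
  rw [eq_div_iff (sub_ne_zero.mpr hβ), mul_comm]
  exact h

theorem stmt4 (q : ℕ) (hq : IsPrimePow q) (K : Type*) [Field K] [Fintype K]
    [DecidableEq K] (hK : Fintype.card K = q ^ 2) (β : K) (hβ : β ^ q ≠ β) :
    ∏ α ∈ (Finset.univ.filter (fun α : K => α ^ q ≠ α)).erase β, (β - α)
      = -1 / (β ^ q - β) :=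
  stmt4_general q K hK β hβ
end

section
/- Let q be a prime power and m a positive integer dividing q + 1. Then the number of pairs (x, y) ∈ F_{q²} × F_{q²} satisfying y^q + y = x^m equals q·(m(q-1) + 1). -/
/-!
Let `q = p ^ k` and `|K| = q ^ 2`. The map `T y = y ^ q + y` is additive and lands in
`𝔽_q = {c | c ^ q = c}`; its kernel and `𝔽_q` both have at most `q` elements, being root sets of
polynomials of degree `q`. Since `|K| = |im T| · |ker T| = q ^ 2`, `T` maps onto `𝔽_q` with all fibres
of size `q`. So each `x` with `x ^ m ∈ 𝔽_q`, i.e. `x = 0` or `x ^ (m (q - 1)) = 1`, carries `q` points,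
and as `m (q - 1)` divides `q ^ 2 - 1 = |Kˣ|`, the cyclic group `Kˣ` has exactly `m (q - 1)` such `x`.
-/

open Finset Polynomial

lemma card_filter_pow_eq_mul_le {R : Type*} [CommRing R] [IsDomain R] [Fintype R] [DecidableEq R]
    {n : ℕ} (hn : 2 ≤ n) (c : R) : #{x : R | x ^ n = c * x} ≤ n := by
  have hdeg : (X ^ n - C c * X : R[X]).natDegree = n := by
    rw [natDegree_sub_eq_left_of_natDegree_lt, natDegree_X_pow]
    simpa using (natDegree_C_mul_le c X).trans_lt (by simp; omega)
  have hne : (X ^ n - C c * X : R[X]) ≠ 0 := ne_zero_of_natDegree_gt (n := 0) (by omega)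
  calc #{x : R | x ^ n = c * x} ≤ (X ^ n - C c * X : R[X]).natDegree :=
        card_le_degree_of_subset_roots fun x hx ↦ by
          simpa [mem_roots hne, sub_eq_zero] using (mem_filter.mp hx).2
    _ = n := hdeg

lemma AddMonoidHom.card_eq_card_image_mul_card_ker {G M : Type*} [AddGroup G] [Fintype G]
    [AddMonoid M] [DecidableEq M] (f : G →+ M) :
    Fintype.card G = #(univ.image f) * #{g : G | f g = 0} := by
  rw [← card_univ, card_eq_sum_card_image f, ← smul_eq_mul, ← sum_const]
  refine sum_congr rfl fun c hc ↦ ?_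
  obtain ⟨g, -, rfl⟩ := mem_image.mp hc
  exact card_fiber_eq_of_mem_range f ⟨g, rfl⟩ ⟨0, map_zero f⟩

lemma FiniteField.card_nthRootsFinset_one_of_dvd {K : Type*} [Field K] [Fintype K] {n : ℕ}
    (hn : n ∣ Fintype.card K - 1) : #(nthRootsFinset n (1 : K)) = n := by
  obtain ⟨g, hg⟩ := IsCyclic.exists_ofOrder_eq_natCard (α := Kˣ)
  rw [Nat.card_units, Nat.card_eq_fintype_card] at hg
  have hg0 : orderOf g ≠ 0 := by
    rw [hg]; have := Fintype.one_lt_card (α := K); omega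
  have hord : orderOf (g ^ (orderOf g / n)) = n := orderOf_pow_orderOf_div hg0 (hg ▸ hn)
  have hζ := IsPrimitiveRoot.orderOf (g ^ (orderOf g / n))
  rw [hord] at hζ
  exact (IsPrimitiveRoot.coe_units_iff.mpr hζ).card_nthRootsFinset

lemma pow_pow_eq_self_iff {M₀ : Type*} [MonoidWithZero M₀] [IsRightCancelMulZero M₀]
    (x : M₀) (m : ℕ) {q : ℕ} (hq : 0 < q) : (x ^ m) ^ q = x ^ m ↔ x = 0 ∨ x ^ (m * (q - 1)) = 1 := by
  have hsplit : (x ^ m) ^ q = x ^ (m * (q - 1)) * x ^ m := by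
    rw [← pow_mul, ← pow_add]; congr 1
    obtain ⟨r, rfl⟩ := Nat.exists_eq_add_of_lt hq; simp [mul_add]
  rcases eq_or_ne x 0 with rfl | hx
  · simp [zero_pow_eq, hq.ne']
  · rw [hsplit, mul_eq_right₀ (pow_ne_zero m hx)]
    simp [hx]

lemma two_le_of_card_eq_sq {α : Type*} [Fintype α] [Nontrivial α] {q : ℕ}
    (h : Fintype.card α = q ^ 2) : 2 ≤ q := by
  have := Fintype.one_lt_card (α := α)
  by_contra! hq
  interval_cases q <;> simp_all

section PowAddSelf

variable (K : Type*) [Field K] (p k : ℕ) [ExpChar K p]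

/-- `y ↦ y ^ p ^ k + y`; on the field with `(p ^ k) ^ 2` elements this is the trace to `𝔽_{p ^ k}`. -/
def powAddSelfHom : K →+ K := (iterateFrobenius K p k).toAddMonoidHom + AddMonoidHom.id K

variable {K p k}

@[simp]
lemma powAddSelfHom_apply (y : K) : powAddSelfHom K p k y = y ^ p ^ k + y := by
  simp [powAddSelfHom, iterateFrobenius_def]

variable [Fintype K]

lemma pow_add_self_pow_eq_self (hK : Fintype.card K = (p ^ k) ^ 2) (y : K) :
    (y ^ p ^ k + y) ^ p ^ k = y ^ p ^ k + y := by
  rw [add_pow_expChar_pow, ← pow_mul, ← sq, ← hK, FiniteField.pow_card, add_comm]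

variable [DecidableEq K]

lemma image_powAddSelfHom_and_card_ker (hK : Fintype.card K = (p ^ k) ^ 2) :
    univ.image (powAddSelfHom K p k) = ({c | c ^ p ^ k = c} : Finset K) ∧
      #{y : K | powAddSelfHom K p k y = 0} = p ^ k := by
  have hq := two_le_of_card_eq_sq hK
  have himage : univ.image (powAddSelfHom K p k) ⊆ ({c | c ^ p ^ k = c} : Finset K) := by
    simp [subset_iff, pow_add_self_pow_eq_self hK]
  have hfix : #{c : K | c ^ p ^ k = c} ≤ p ^ k := by
    simpa using card_filter_pow_eq_mul_le hq (1 : K)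
  have hker : #{y : K | powAddSelfHom K p k y = 0} ≤ p ^ k := by
    convert card_filter_pow_eq_mul_le hq (-1 : K) using 3
    simp [add_eq_zero_iff_eq_neg]
  have hcard := (powAddSelfHom K p k).card_eq_card_image_mul_card_ker
  rw [hK] at hcard
  have hle := card_le_card himage
  refine ⟨eq_of_subset_of_card_le himage ?_, ?_⟩ <;> nlinarith

lemma card_filter_pow_add_self_eq (hK : Fintype.card K = (p ^ k) ^ 2) (c : K) :
    #{y : K | y ^ p ^ k + y = c} = if c ^ p ^ k = c then p ^ k else 0 := by
  obtain ⟨himage, hker⟩ := image_powAddSelfHom_and_card_ker hK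
  have hrange (c : K) : c ∈ Set.range (powAddSelfHom K p k) ↔ c ^ p ^ k = c := by
    simpa using congrArg (c ∈ ·) himage
  simp only [← powAddSelfHom_apply]
  split_ifs with hc
  · rw [← hker]
    exact AddMonoidHom.card_fiber_eq_of_mem_range _ ((hrange c).2 hc) ⟨0, map_zero _⟩
  · rw [card_eq_zero, filter_eq_empty_iff]
    exact fun y _ hy ↦ hc ((hrange c).1 ⟨y, hy⟩)

end PowAddSelf

lemma card_filter_pow_pow_eq_self {K : Type*} [Field K] [Fintype K] [DecidableEq K] {m q : ℕ}
    (h : m * (q - 1) ∣ Fintype.card K - 1) : #{x : K | (x ^ m) ^ q = x ^ m} = m * (q - 1) + 1 := by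
  have hn : 0 < m * (q - 1) := Nat.pos_of_ne_zero fun h0 ↦ by
    have := Fintype.one_lt_card (α := K)
    rw [h0, zero_dvd_iff] at h
    omega
  have hq : 0 < q := Nat.pos_of_ne_zero (by rintro rfl; simp at hn)
  have hset : ({x : K | (x ^ m) ^ q = x ^ m} : Finset K) =
      insert 0 (nthRootsFinset (m * (q - 1)) (1 : K)) := by
    ext x
    simp [pow_pow_eq_self_iff x m hq, mem_nthRootsFinset hn]
  rw [hset, card_insert_of_notMem (by simp [mem_nthRootsFinset hn, zero_pow hn.ne']),
    FiniteField.card_nthRootsFinset_one_of_dvd h]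

theorem stmt9_general (q m : ℕ) (hq : IsPrimePow q) (hdvd : m ∣ q + 1)
    (K : Type*) [Field K] [Fintype K] [DecidableEq K]
    (hK : Fintype.card K = q ^ 2) :
    (Finset.univ.filter (fun p : K × K => p.2 ^ q + p.2 = p.1 ^ m)).card
      = q * (m * (q - 1) + 1) := by
  obtain ⟨p, k, hp, -, rfl⟩ := hq
  have := Fact.mk hp.nat_prime
  have : CharP K p := charP_of_card_eq_prime_pow (hK.trans (pow_mul p k 2).symm)
  have hdvd' : m * (p ^ k - 1) ∣ Fintype.card K - 1 := by
    have hsq : (p ^ k) ^ 2 - 1 = (p ^ k - 1) * (p ^ k + 1) := by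
      simpa [mul_comm] using Nat.sq_sub_sq (p ^ k) 1
    rw [hK, hsq, mul_comm m]
    exact mul_dvd_mul_left _ hdvd
  calc #{xy : K × K | xy.2 ^ p ^ k + xy.2 = xy.1 ^ m}
      = ∑ x : K, #{y : K | y ^ p ^ k + y = x ^ m} := by
        rw [card_filter, Fintype.sum_prod_type]; simp only [card_filter]
    _ = ∑ x : K, if (x ^ m) ^ p ^ k = x ^ m then p ^ k else 0 := by
        simp only [card_filter_pow_add_self_eq hK]
    _ = p ^ k * (m * (p ^ k - 1) + 1) := by
        rw [← sum_filter, sum_const, card_filter_pow_pow_eq_self hdvd', smul_eq_mul, mul_comm]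

theorem stmt9 (q m : ℕ) (hq : IsPrimePow q) (hm : 0 < m) (hdvd : m ∣ q + 1)
    (K : Type*) [Field K] [Fintype K] [DecidableEq K]
    (hK : Fintype.card K = q ^ 2) :
    (Finset.univ.filter (fun p : K × K => p.2 ^ q + p.2 = p.1 ^ m)).card
      = q * (m * (q - 1) + 1) :=
  stmt9_general q m hq hdvd K hK
end

section
/- Let F be a field, n ≥ 1, α_1, ..., α_n pairwise distinct elements of F, and v_1, ..., v_n nonzero elements of F such that v_i² · ∏_{j≠i}(α_i - α_j) = c for some fixed c ∈ F^* independent of i. Then for any two polynomials f, g ∈ F[x] with deg f ≤ n/2 - 1 and deg g ≤ n/2 - 1 (n even), the sum over i of v_i² f(α_i) g(α_i) equals 0; that is, the generalized Reed-Solomon code GRS_{n/2}({α_i}, (v_i)) is Euclidean self-orthogonal. -/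
open Polynomial Finset

lemma coeff_basis_eq_nodalWeight {F : Type*} [Field F] {n : ℕ} (α : Fin n → F)
    (hα : Function.Injective α) (i : Fin n) :
    (Lagrange.basis Finset.univ α i).coeff (n - 1) = Lagrange.nodalWeight Finset.univ α i := by
  have hinj : Set.InjOn α ↑(Finset.univ : Finset (Fin n)) := fun a _ b _ hab => hα hab
  have hdeg := Lagrange.degree_basis hinj (Finset.mem_univ i)
  have hcard : ((Finset.univ : Finset (Fin n)).card - 1) = n - 1 := by simp
  have hnd : (Lagrange.basis Finset.univ α i).natDegree = n - 1 :=
    natDegree_eq_of_degree_eq_some (by rw [hdeg, hcard])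
  rw [← hnd, coeff_natDegree]
  unfold Lagrange.basis Lagrange.nodalWeight
  rw [leadingCoeff_prod]
  refine Finset.prod_congr rfl fun j hj => ?_
  unfold Lagrange.basisDivisor
  rw [leadingCoeff_mul, leadingCoeff_C, (monic_X_sub_C (α j)).leadingCoeff, mul_one]

theorem stmt13 (F : Type*) [Field F] (n : ℕ) (hn : 1 ≤ n) (hne : Even n)
    (α v : Fin n → F) (hα : Function.Injective α) (hv : ∀ i, v i ≠ 0)
    (c : F) (hc : c ≠ 0)
    (h : ∀ i, v i ^ 2 * ∏ j ∈ Finset.univ.erase i, (α i - α j) = c)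
    (f g : Polynomial F)
    (hf : f.degree ≤ ((n / 2 - 1 : ℕ) : WithBot ℕ))
    (hg : g.degree ≤ ((n / 2 - 1 : ℕ) : WithBot ℕ)) :
    ∑ i, v i ^ 2 * f.eval (α i) * g.eval (α i) = 0 := by
  classical
  have hn2 : 2 ≤ n := by obtain ⟨k, hk⟩ := hne; omega
  have hinj : Set.InjOn α ↑(Finset.univ : Finset (Fin n)) := fun a _ b _ hab => hα hab
  set p := f * g with hp
  have hdegp : p.degree ≤ ((n - 2 : ℕ) : WithBot ℕ) := by
    calc p.degree ≤ f.degree + g.degree := degree_mul_le f g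
      _ ≤ ((n / 2 - 1 : ℕ) : WithBot ℕ) + ((n / 2 - 1 : ℕ) : WithBot ℕ) := add_le_add hf hg
      _ = ((n - 2 : ℕ) : WithBot ℕ) := by
          rw [← Nat.cast_add]
          congr 1
          obtain ⟨k, hk⟩ := hne; omega
  have hlt : p.degree < ((Finset.univ : Finset (Fin n)).card : WithBot ℕ) := by
    rw [Finset.card_univ, Fintype.card_fin]
    exact lt_of_le_of_lt hdegp (by exact_mod_cast (by omega : n - 2 < n))
  have hip := Lagrange.eq_interpolate hinj hlt
  have hc0 : p.coeff (n - 1) = 0 :=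
    coeff_eq_zero_of_degree_lt
      (lt_of_le_of_lt hdegp (by exact_mod_cast (by omega : n - 2 < n - 1)))
  have hsum : ∑ i, p.eval (α i) * Lagrange.nodalWeight Finset.univ α i = 0 := by
    have h2 := congrArg (fun q => q.coeff (n - 1)) hip
    simp only [Lagrange.interpolate_apply, finset_sum_coeff, coeff_C_mul] at h2
    rw [hc0] at h2
    have h3 : ∑ i, p.eval (α i) * Lagrange.nodalWeight Finset.univ α i
        = ∑ i, p.eval (α i) * (Lagrange.basis Finset.univ α i).coeff (n - 1) :=
      Finset.sum_congr rfl fun i _ => by rw [coeff_basis_eq_nodalWeight α hα i]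
    rw [h3]
    exact h2.symm
  have hv2 : ∀ i, v i ^ 2 = c * Lagrange.nodalWeight Finset.univ α i := by
    intro i
    have hprod : (∏ j ∈ Finset.univ.erase i, (α i - α j)) ≠ 0 := by
      intro h0
      have hi := h i
      rw [h0, mul_zero] at hi
      exact hc hi.symm
    have : Lagrange.nodalWeight Finset.univ α i
        = (∏ j ∈ Finset.univ.erase i, (α i - α j))⁻¹ := by
      unfold Lagrange.nodalWeight
      rw [← Finset.prod_inv_distrib]
    rw [this, ← h i, mul_assoc, mul_inv_cancel₀ hprod, mul_one]
  calc ∑ i, v i ^ 2 * f.eval (α i) * g.eval (α i)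
      = ∑ i, c * (p.eval (α i) * Lagrange.nodalWeight Finset.univ α i) := by
        refine Finset.sum_congr rfl fun i _ => ?_
        rw [hv2 i, hp, eval_mul]; ring
    _ = c * ∑ i, p.eval (α i) * Lagrange.nodalWeight Finset.univ α i := by
        rw [Finset.mul_sum]
    _ = 0 := by rw [hsum, mul_zero]
end

section
/- Let p be a prime, F a field of characteristic p, and V a finite additive subgroup of F. Then the polynomial f_V(x) = ∏_{v ∈ V}(x - v) is additive: f_V(a + b) = f_V(a) + f_V(b) for all a, b ∈ F. -/
open Polynomial

theorem stmt14 (p : ℕ) (hp : p.Prime) (F : Type*) [Field F] [CharP F p]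
    (V : AddSubgroup F) (hV : (V : Set F).Finite) (a b : F) :
    ∏ v ∈ hV.toFinset, (a + b - v)
      = ∏ v ∈ hV.toFinset, (a - v) + ∏ v ∈ hV.toFinset, (b - v) := by
  classical
  set s := hV.toFinset with hs
  have hmem : ∀ v, v ∈ s ↔ v ∈ V := by intro v; simp [hs]
  -- translation invariance: for y ∈ V, ∏ (x + y - v) = ∏ (x - v)
  have htrans : ∀ (x : F) (y : F), y ∈ V →
      ∏ v ∈ s, (x + y - v) = ∏ v ∈ s, (x - v) := by
    intro x y hy
    refine Finset.prod_nbij' (fun v => v - y) (fun v => v + y) ?_ ?_ ?_ ?_ ?_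
    · intro v hv; rw [hmem] at *; exact V.sub_mem hv hy
    · intro v hv; rw [hmem] at *; exact V.add_mem hv hy
    · intro v _; ring
    · intro v _; ring
    · intro v _; ring
  have hcard : 0 < s.card := Finset.card_pos.2 ⟨0, (hmem 0).2 V.zero_mem⟩
  -- polynomials
  set f : F[X] := ∏ v ∈ s, (X - C v) with hf
  set g : F[X] := ∏ v ∈ s, (X - C (v - a)) with hg
  have hfm : f.Monic := monic_prod_of_monic _ _ fun v _ => monic_X_sub_C v
  have hgm : g.Monic := monic_prod_of_monic _ _ fun v _ => monic_X_sub_C _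
  have hfd : f.natDegree = s.card := by
    rw [hf, natDegree_prod _ _ (fun v _ => X_sub_C_ne_zero v)]
    simp
  have hgd : g.natDegree = s.card := by
    rw [hg, natDegree_prod _ _ (fun v _ => X_sub_C_ne_zero _)]
    simp only [natDegree_X_sub_C, Finset.sum_const, smul_eq_mul, mul_one]
  have hfe : ∀ x : F, f.eval x = ∏ v ∈ s, (x - v) := by
    intro x; simp [hf, eval_prod]
  have hge : ∀ x : F, g.eval x = ∏ v ∈ s, (a + x - v) := by
    intro x
    simp only [hg, eval_prod, eval_sub, eval_X, eval_C]
    exact Finset.prod_congr rfl fun v _ => by ring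
  set Q : F[X] := g - f - C (∏ v ∈ s, (a - v)) with hQ
  have hQ0 : Q = 0 := by
    apply eq_zero_of_natDegree_lt_card_of_eval_eq_zero' Q s
    · intro y hy
      have : g.eval y = ∏ v ∈ s, (a - v) := by
        rw [hge, htrans a y ((hmem y).1 hy)]
      have hfy : f.eval y = 0 := by
        rw [hfe]
        exact Finset.prod_eq_zero hy (by ring)
      rw [hQ]
      simp only [eval_sub, eval_C]
      rw [this, hfy]
      ring
    · have h1 : (g - f).natDegree < s.card := by
        rcases eq_or_ne g f with h | h
        · simpa [h] using hcard
        · have hd : g.degree = f.degree := by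
            rw [degree_eq_natDegree hgm.ne_zero, degree_eq_natDegree hfm.ne_zero, hfd, hgd]
          have := Polynomial.degree_sub_lt hd hgm.ne_zero
            (by rw [hgm.leadingCoeff, hfm.leadingCoeff])
          have h2 : (g - f).degree < (s.card : ℕ) := by
            rw [degree_eq_natDegree hgm.ne_zero, hgd] at hd
            calc (g - f).degree < g.degree := this
              _ = (s.card : ℕ) := by rw [degree_eq_natDegree hgm.ne_zero, hgd]
          exact natDegree_lt_iff_degree_lt (by simpa using sub_ne_zero.2 h) |>.2 h2
      calc Q.natDegree ≤ max (g - f).natDegree (C (∏ v ∈ s, (a - v))).natDegree :=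
            natDegree_sub_le _ _
        _ < s.card := by
            rw [natDegree_C]
            simp [max_lt_iff, h1, hcard]
  have := congrArg (Polynomial.eval b) hQ0
  simp only [hQ, eval_sub, eval_C, eval_zero] at this
  rw [hge, hfe] at this
  linear_combination this
end
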